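/- Let n, k, h be positive integers with k dividing h. Then θ_k(n, h) ≥ θ_1(n^k, h/k); that is, the probability that the labelled complete n-ary tree of height h contains a k-accessible root-to-leaf path is at least the probability that the labelled complete n^k-ary tree of height h/k contains a 1-accessible root-to-leaf path. -/
import Mathlib


open MeasureTheory Filter

/-- A vertex of the complete `n`-ary tree of height `h`: at depth `i ≤ h`,
a vertex is a word of length `i` over an alphabet of size `n`. -/
abbrev TreeVertex (n h : ℕ) : Type := (i : Fin (h + 1)) × (Fin i.val → Fin n)

/-- The vertex at depth `i` on the root-to-leaf path determined by `leaf`: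
the length-`i` prefix of `leaf`. -/
def pathVertex {n h : ℕ} (leaf : Fin h → Fin n) (i : Fin (h + 1)) : TreeVertex n h :=
  ⟨i, fun j => leaf ⟨j.val, lt_of_lt_of_le j.isLt (Nat.lt_succ_iff.mp i.isLt)⟩⟩

/-- The event (set of labelings `ω` of the vertices) that some root-to-leaf path of
the complete `n`-ary tree of height `h` is `k`-accessible: there is a leaf and
indices `0 = r 0 < r 1 < ⋯ < r t = h` with consecutive gaps at most `k` along which
the labels are strictly increasing. -/
def kAccessibleEvent (k n h : ℕ) : Set (TreeVertex n h → ℝ) :=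
  {ω | ∃ leaf : Fin h → Fin n, ∃ t : ℕ, ∃ r : Fin (t + 1) → Fin (h + 1),
    StrictMono r ∧ r 0 = 0 ∧ r (Fin.last t) = Fin.last h ∧
    (∀ i : Fin t, (r i.succ).val ≤ (r i.castSucc).val + k) ∧
    StrictMono fun i => ω (pathVertex leaf (r i))}

/-- The vertices are labelled by i.i.d. Uniform[0,1] random variables: the product
over all vertices of Lebesgue measure restricted to `[0,1]`. -/
noncomputable def treeLabelMeasure (n h : ℕ) : Measure (TreeVertex n h → ℝ) :=
  Measure.pi fun _ => (volume : Measure ℝ).restrict (Set.Icc 0 1)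

/-- `theta k n h` is the probability that the labelled complete `n`-ary tree of
height `h` contains a `k`-accessible root-to-leaf path. -/
noncomputable def theta (k n h : ℕ) : ℝ :=
  (treeLabelMeasure n h (kAccessibleEvent k n h)).toReal

/-! ### Auxiliary material -/

instance : IsProbabilityMeasure ((volume : Measure ℝ).restrict (Set.Icc 0 1)) := by
  constructor
  rw [Measure.restrict_apply_univ, Real.volume_Icc]
  norm_num

instance (n h : ℕ) : IsProbabilityMeasure (treeLabelMeasure n h) := by
  unfold treeLabelMeasure
  infer_instance

lemma pi_map_comp {α β : Type*} [Fintype α] [Fintype β] [DecidableEq β]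
    (ν : Measure ℝ) [IsProbabilityMeasure ν] (f : α → β) (hf : Function.Injective f) :
    Measure.map (fun ω : β → ℝ => ω ∘ f) (Measure.pi fun _ : β => ν)
      = Measure.pi (fun _ : α => ν) := by
  refine (Measure.pi_eq fun s hs => ?_).symm
  have hmeas : Measurable fun ω : β → ℝ => ω ∘ f :=
    measurable_pi_lambda _ fun a => measurable_pi_apply (f a)
  rw [Measure.map_apply hmeas (MeasurableSet.univ_pi hs)]
  have hpre : (fun ω : β → ℝ => ω ∘ f) ⁻¹' Set.pi Set.univ s
      = Set.pi Set.univ (fun b => ⋂ a ∈ {a | f a = b}, s a) := by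
    ext ω
    simp only [Set.mem_preimage, Set.mem_pi, Set.mem_univ, forall_true_left,
      Set.mem_iInter, Set.mem_setOf_eq, Function.comp_apply]
    exact ⟨fun h b a hab => hab ▸ h a, fun h a => h (f a) a rfl⟩
  rw [hpre, Measure.pi_pi]
  have h1 : ∀ a, (⋂ a' ∈ {a' | f a' = f a}, s a') = s a := by
    intro a
    ext x
    simp only [Set.mem_iInter, Set.mem_setOf_eq]
    exact ⟨fun hx => hx a rfl, fun hx a' h => by cases hf h; exact hx⟩
  calc (∏ b, ν (⋂ a ∈ {a | f a = b}, s a))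
      = ∏ b ∈ Finset.univ.image f, ν (⋂ a ∈ {a | f a = b}, s a) := by
        refine (Finset.prod_subset (Finset.subset_univ _) fun b _ hb => ?_).symm
        have : (⋂ a ∈ {a | f a = b}, s a) = Set.univ := by
          have : ∀ a, f a ≠ b := by
            intro a hab
            exact hb (Finset.mem_image.mpr ⟨a, Finset.mem_univ a, hab⟩)
          simp [this]
        rw [this, measure_univ]
    _ = ∏ a, ν (⋂ a' ∈ {a' | f a' = f a}, s a') :=
        Finset.prod_image fun a _ a' _ h => hf h
    _ = ∏ a, ν (s a) := Finset.prod_congr rfl fun a _ => by rw [h1]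

lemma measurableSet_strictMonoLabels {n h : ℕ} {ι : Type*} [Preorder ι] [Countable ι]
    (v : ι → TreeVertex n h) :
    MeasurableSet {ω : TreeVertex n h → ℝ | StrictMono fun i => ω (v i)} := by
  have : {ω : TreeVertex n h → ℝ | StrictMono fun i => ω (v i)}
      = ⋂ (i : ι) (j : ι) (_ : i < j), {ω | ω (v i) < ω (v j)} := by
    ext ω
    simp only [Set.mem_setOf_eq, Set.mem_iInter, StrictMono]
  rw [this]
  exact MeasurableSet.iInter fun i => MeasurableSet.iInter fun j =>
    MeasurableSet.iInter fun _ =>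
      measurableSet_lt (measurable_pi_apply _) (measurable_pi_apply _)

lemma measurableSet_kAccessibleEvent (k n h : ℕ) :
    MeasurableSet (kAccessibleEvent k n h) := by
  have : kAccessibleEvent k n h
      = ⋃ (leaf : Fin h → Fin n) (t : ℕ) (r : Fin (t + 1) → Fin (h + 1)),
        ({ω : TreeVertex n h → ℝ | StrictMono r ∧ r 0 = 0 ∧ r (Fin.last t) = Fin.last h ∧
          ∀ i : Fin t, (r i.succ).val ≤ (r i.castSucc).val + k}
          ∩ {ω | StrictMono fun i => ω (pathVertex leaf (r i))}) := by
    ext ω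
    simp only [kAccessibleEvent, Set.mem_setOf_eq, Set.mem_iUnion, Set.mem_inter_iff]
    tauto
  rw [this]
  refine MeasurableSet.iUnion fun leaf => MeasurableSet.iUnion fun t =>
    MeasurableSet.iUnion fun r => MeasurableSet.inter ?_ (measurableSet_strictMonoLabels _)
  by_cases hP : StrictMono r ∧ r 0 = 0 ∧ r (Fin.last t) = Fin.last h ∧
      ∀ i : Fin t, (r i.succ).val ≤ (r i.castSucc).val + k
  · simp only [hP]
    convert MeasurableSet.univ
    simp [hP]
  · convert MeasurableSet.empty
    simp only [Set.eq_empty_iff_forall_notMem, Set.mem_setOf_eq]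
    exact fun _ h => hP h

/-- Embedding of the complete `n^k`-ary tree of height `m` into the complete
`n`-ary tree of height `m * k`. -/
def treeEmb (n k m : ℕ) (hk : 0 < k) : TreeVertex (n ^ k) m → TreeVertex n (m * k) :=
  fun v => ⟨⟨v.1.val * k, Nat.lt_succ_of_le (Nat.mul_le_mul_right k (Nat.lt_succ_iff.mp v.1.isLt))⟩,
    fun j => finFunctionFinEquiv.symm
      (v.2 ⟨j.val / k, (Nat.div_lt_iff_lt_mul hk).mpr j.isLt⟩)
      ⟨j.val % k, Nat.mod_lt _ hk⟩⟩

lemma treeEmb_injective {n k m : ℕ} (hk : 0 < k) : Function.Injective (treeEmb n k m hk) := by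
  rintro ⟨i, w⟩ ⟨i', w'⟩ h
  obtain ⟨h1, h2⟩ := Sigma.mk.inj_iff.mp h
  have hi : i = i' := by
    have := congrArg Fin.val h1
    exact Fin.ext (Nat.eq_of_mul_eq_mul_right hk this)
  subst hi
  have h2' := eq_of_heq h2
  refine Sigma.mk.inj_iff.mpr ⟨rfl, heq_of_eq ?_⟩
  funext p
  apply finFunctionFinEquiv.symm.injective
  funext q
  have hj : p.val * k + q.val < i.val * k := by
    calc p.val * k + q.val < p.val * k + k := by omega
    _ = (p.val + 1) * k := by ring
    _ ≤ i.val * k := Nat.mul_le_mul_right k p.isLt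
  have := congrFun h2' ⟨p.val * k + q.val, hj⟩
  have hdiv : (p.val * k + q.val) / k = p.val := by
    rw [mul_comm, Nat.mul_add_div hk, Nat.div_eq_of_lt q.isLt, add_zero]
  have hmod : (p.val * k + q.val) % k = q.val := by
    rw [mul_comm, Nat.mul_add_mod, Nat.mod_eq_of_lt q.isLt]
  simp only [treeEmb] at this
  convert this using 2 <;> simp [hdiv, hmod]

/-- The big-tree leaf corresponding to a small-tree leaf. -/
def bigLeaf {n k m : ℕ} (hk : 0 < k) (leaf' : Fin m → Fin (n ^ k)) : Fin (m * k) → Fin n :=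
  fun j => finFunctionFinEquiv.symm
    (leaf' ⟨j.val / k, (Nat.div_lt_iff_lt_mul hk).mpr j.isLt⟩)
    ⟨j.val % k, Nat.mod_lt _ hk⟩

lemma treeEmb_pathVertex {n k m : ℕ} (hk : 0 < k) (leaf' : Fin m → Fin (n ^ k))
    (i : Fin (m + 1)) (i' : Fin (m * k + 1)) (hi : i'.val = i.val * k) :
    treeEmb n k m hk (pathVertex leaf' i) = pathVertex (bigLeaf hk leaf') i' := by
  cases i' with
  | mk iv hiv =>
    simp only [treeEmb, pathVertex, bigLeaf] at hi ⊢
    subst hi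
    rfl

set_option synthInstance.maxHeartbeats 1000000 in
theorem theta_k_ge_theta_one_pow
    (n k h : ℕ) (hn : 0 < n) (hk : 0 < k) (hh : 0 < h) (hdvd : k ∣ h) :
    theta 1 (n ^ k) (h / k) ≤ theta k n h := by
  classical
  obtain ⟨m, rfl⟩ : ∃ m, h = m * k := ⟨h / k, (Nat.div_mul_cancel hdvd).symm⟩
  rw [Nat.mul_div_cancel _ hk]
  set ν : Measure ℝ := (volume : Measure ℝ).restrict (Set.Icc 0 1) with hν
  set Φ : (TreeVertex n (m * k) → ℝ) → (TreeVertex (n ^ k) m → ℝ) :=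
    fun ω => ω ∘ treeEmb n k m hk with hΦ
  have hpres : MeasurePreserving Φ (treeLabelMeasure n (m * k)) (treeLabelMeasure (n ^ k) m) := by
    refine ⟨measurable_pi_lambda _ fun a => measurable_pi_apply _, ?_⟩
    exact pi_map_comp ν (treeEmb n k m hk) (treeEmb_injective hk)
  have hsub : Φ ⁻¹' kAccessibleEvent 1 (n ^ k) m ⊆ kAccessibleEvent k n (m * k) := by
    intro ω hω
    obtain ⟨leaf', t, r', hmono, h0, hlast, hgap, hsm⟩ := hω
    refine ⟨bigLeaf hk leaf', t,
      fun i => ⟨(r' i).val * k,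
        Nat.lt_succ_of_le (Nat.mul_le_mul_right k (Nat.lt_succ_iff.mp (r' i).isLt))⟩,
      ?_, ?_, ?_, ?_, ?_⟩
    · intro a b hab
      exact (Nat.mul_lt_mul_right hk).mpr (hmono hab)
    · apply Fin.ext
      simp [h0]
    · apply Fin.ext
      simp [hlast]
    · intro i
      have := hgap i
      calc (r' i.succ).val * k ≤ ((r' i.castSucc).val + 1) * k :=
        Nat.mul_le_mul_right k this
      _ = (r' i.castSucc).val * k + k := by ring
    · have key : ∀ i : Fin (t + 1),
          pathVertex (bigLeaf hk leaf')
            (⟨(r' i).val * k,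
              Nat.lt_succ_of_le (Nat.mul_le_mul_right k (Nat.lt_succ_iff.mp (r' i).isLt))⟩ :
              Fin (m * k + 1))
          = treeEmb n k m hk (pathVertex leaf' (r' i)) :=
        fun i => (treeEmb_pathVertex hk leaf' (r' i) _ rfl).symm
      simp only [key]
      exact hsm
  have h1 : treeLabelMeasure (n ^ k) m (kAccessibleEvent 1 (n ^ k) m)
      = treeLabelMeasure n (m * k) (Φ ⁻¹' kAccessibleEvent 1 (n ^ k) m) :=
    (hpres.measure_preimage (measurableSet_kAccessibleEvent _ _ _).nullMeasurableSet).symm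
  have h2 : treeLabelMeasure n (m * k) (Φ ⁻¹' kAccessibleEvent 1 (n ^ k) m)
      ≤ treeLabelMeasure n (m * k) (kAccessibleEvent k n (m * k)) :=
    measure_mono hsub
  unfold theta
  rw [ENNReal.toReal_le_toReal (measure_ne_top _ _) (measure_ne_top _ _)]
  rw [h1]
  exact h2
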